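/- For a signed graph Σ = (G, σ) with connected underlying simple graph G, the following are equivalent: (i) Σ is balanced; (ii) D^max(Σ) is cospectral with the distance matrix D(G); (iii) D^min(Σ) is cospectral with D(G); (iv) the largest eigenvalue of D^max(Σ) equals the largest eigenvalue of D(G); (v) the largest eigenvalue of D^min(Σ) equals the largest eigenvalue of D(G). -/

import Mathlib

open SimpleGraph

/-- The sign (product of edge signs) of a walk in a graph, computed along its darts. -/
def walkSign {V : Type*} {G : SimpleGraph V} (σ : V → V → ℤ) {u v : V} (p : G.Walk u v) : ℤ :=
  (p.darts.map fun d => σ d.toProd.1 d.toProd.2).prod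

/-- `σ` is a signature on `G`: a symmetric function that is `±1`-valued on edges. -/
def IsSignature {V : Type*} (G : SimpleGraph V) (σ : V → V → ℤ) : Prop :=
  (∀ u v, σ u v = σ v u) ∧ ∀ u v, G.Adj u v → σ u v = 1 ∨ σ u v = -1

/-- A signed graph is balanced when every cycle has sign `+1`. -/
def IsBalanced {V : Type*} (G : SimpleGraph V) (σ : V → V → ℤ) : Prop :=
  ∀ (u : V) (p : G.Walk u u), p.IsCycle → walkSign σ p = 1

/-- A walk is a shortest path when it is a path whose length is the graph distance
between its endpoints. -/
def IsShortestPath {V : Type*} {G : SimpleGraph V} {u v : V} (p : G.Walk u v) : Prop :=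
  p.IsPath ∧ p.length = G.dist u v

open scoped Classical in
/-- `σmax u v = +1` if some shortest `u v`-path is positive, `-1` otherwise. -/
noncomputable def sigmaMax {V : Type*} (G : SimpleGraph V) (σ : V → V → ℤ) (u v : V) : ℤ :=
  if ∃ p : G.Walk u v, IsShortestPath p ∧ walkSign σ p = 1 then 1 else -1

open scoped Classical in
/-- `σmin u v = +1` if all shortest `u v`-paths are positive, `-1` otherwise. -/
noncomputable def sigmaMin {V : Type*} (G : SimpleGraph V) (σ : V → V → ℤ) (u v : V) : ℤ :=
  if ∀ p : G.Walk u v, IsShortestPath p → walkSign σ p = 1 then 1 else -1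

/-- The signed distance matrix `D^max`, with `(u,v)` entry `σmax(u,v)·d(u,v)`. -/
noncomputable def Dmax {V : Type*} (G : SimpleGraph V) (σ : V → V → ℤ) : Matrix V V ℝ :=
  Matrix.of fun u v => (sigmaMax G σ u v : ℝ) * (G.dist u v : ℝ)

/-- The signed distance matrix `D^min`, with `(u,v)` entry `σmin(u,v)·d(u,v)`. -/
noncomputable def Dmin {V : Type*} (G : SimpleGraph V) (σ : V → V → ℤ) : Matrix V V ℝ :=
  Matrix.of fun u v => (sigmaMin G σ u v : ℝ) * (G.dist u v : ℝ)

/-- Two vertices are distance-compatible if all shortest paths between them have the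
same sign. -/
def Compatible {V : Type*} (G : SimpleGraph V) (σ : V → V → ℤ) (u v : V) : Prop :=
  ∀ p q : G.Walk u v, IsShortestPath p → IsShortestPath q → walkSign σ p = walkSign σ q

/-- A signed graph is distance-compatible if every pair of vertices is
distance-compatible. -/
def IsCompatibleGraph {V : Type*} (G : SimpleGraph V) (σ : V → V → ℤ) : Prop :=
  ∀ u v, Compatible G σ u v

/-- The largest eigenvalue of a (symmetric) real matrix: the supremum of the set of real
roots of its characteristic polynomial. -/
noncomputable def largestEigenvalue {n : Type*} [Fintype n] [DecidableEq n]
    (M : Matrix n n ℝ) : ℝ :=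
  sSup {x : ℝ | M.charpoly.IsRoot x}

/-!
A signed graph is balanced iff it is switching equivalent to the all-positive one:
`σ u v = ε u * ε v` on edges for some `ε : V → ℤˣ` (Harary). Then every `u v`-walk has sign
`ε u * ε v`, so `D^max` and `D^min` both equal `E * D * E` with `E = diagonal ε`, and are
cospectral with `D`.

Conversely, let `M` be `D^max` or `D^min`, so that `|M| = D` entrywise and `M` agrees with `σ`
on edges, and suppose `λ₁(M) = λ₁(D) = r`. For an `r`-eigenvector `x` of `M`,
`r ‖x‖² = xᵀ M x ≤ |x|ᵀ D |x| ≤ r ‖x‖²`. Equality in the Rayleigh bound makes `|x|` an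
`r`-eigenvector of `D`, which has no zero entry because `D` is positive off the diagonal, and
equality termwise gives `M = E * D * E` with `E = diagonal (sign x)`. On edges this reads
`σ u v = sign (x u) * sign (x v)`, so `Σ` is balanced.
-/

section SignedGraph

variable {V : Type*} {G : SimpleGraph V} {σ : V → V → ℤ}

@[simp] lemma walkSign_nil {u : V} : walkSign σ (Walk.nil : G.Walk u u) = 1 := rfl

@[simp] lemma walkSign_cons {u v w : V} (h : G.Adj u v) (p : G.Walk v w) :
    walkSign σ (.cons h p) = σ u v * walkSign σ p := by
  simp [walkSign]

lemma walkSign_append {u v w : V} (p : G.Walk u v) (q : G.Walk v w) :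
    walkSign σ (p.append q) = walkSign σ p * walkSign σ q := by
  simp [walkSign, Walk.darts_append]

lemma walkSign_reverse (hσ : ∀ u v, σ u v = σ v u) {u v : V} (p : G.Walk u v) :
    walkSign σ p.reverse = walkSign σ p := by
  induction p with
  | nil => rfl
  | cons h p ih => simp [walkSign_append, ih, hσ, mul_comm]

lemma walkSign_eq_of_length_eq_one {u v : V} {p : G.Walk u v} (hp : p.length = 1) :
    walkSign σ p = σ u v := by
  match p, hp with
  | .cons _ .nil, _ => simp

lemma isUnit_walkSign (hσ : ∀ u v, G.Adj u v → σ u v = 1 ∨ σ u v = -1) {u v : V}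
    (p : G.Walk u v) : IsUnit (walkSign σ p) := by
  induction p with
  | nil => exact isUnit_one
  | cons h p ih =>
    rw [walkSign_cons]
    exact (Int.isUnit_iff.mpr (hσ _ _ h)).mul ih

lemma walkSign_eq_of_switching {ε : V → ℤˣ} (hε : ∀ u v, G.Adj u v → σ u v = ↑(ε u * ε v))
    {u v : V} (p : G.Walk u v) : walkSign σ p = ↑(ε u * ε v) := by
  induction p with
  | nil => simp [Int.units_mul_self]
  | @cons u v w h p ih =>
    rw [walkSign_cons, ih, hε u v h, ← Units.val_mul]
    simp [mul_assoc, ← mul_assoc (ε v), Int.units_mul_self]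

lemma IsBalanced.walkSign_cons_of_isPath (hσ : IsSignature G σ) (hb : IsBalanced G σ)
    {u v : V} (h : G.Adj u v) {q : G.Walk v u} (hq : q.IsPath) :
    walkSign σ (.cons h q) = 1 := by
  cases q with
  | nil => exact (G.irrefl h).elim
  | cons _ r =>
    cases r with
    | nil => rcases hσ.2 u v h with h1 | h1 <;> simp [hσ.1 v u, h1]
    | cons _ _ =>
      refine hb u _ (Walk.isCycle_iff_isPath_tail_and_le_length.mpr ⟨?_, ?_⟩)
      · simpa using hq
      · simp

/-- Each detour removed by `bypass` is a path closed up by one edge: a cycle, or an edge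
traversed back and forth. -/
lemma IsBalanced.walkSign_bypass [DecidableEq V] (hσ : IsSignature G σ) (hb : IsBalanced G σ)
    {u v : V} (p : G.Walk u v) : walkSign σ p.bypass = walkSign σ p := by
  induction p with
  | nil => rfl
  | @cons u v w h p ih =>
    simp only [Walk.bypass]
    split_ifs with hu
    · have hsplit := congrArg (walkSign σ) (p.bypass.take_spec hu)
      have hclosed := hb.walkSign_cons_of_isPath hσ h (p.bypass_isPath.takeUntil hu)
      rw [walkSign_append, ih] at hsplit
      rw [walkSign_cons] at hclosed
      rw [walkSign_cons, ← hsplit, ← mul_assoc, hclosed, one_mul]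
    · rw [walkSign_cons, walkSign_cons, ih]

lemma IsBalanced.walkSign_eq_one (hσ : IsSignature G σ) (hb : IsBalanced G σ) {u : V}
    (c : G.Walk u u) : walkSign σ c = 1 := by
  classical
  rw [← hb.walkSign_bypass hσ, (Walk.isPath_iff_nil.mp c.bypass_isPath).eq_nil, walkSign_nil]

lemma IsBalanced.walkSign_eq (hσ : IsSignature G σ) (hb : IsBalanced G σ) {u v : V}
    (p q : G.Walk u v) : walkSign σ p = walkSign σ q := by
  have hpq := hb.walkSign_eq_one hσ (p.append q.reverse)
  rw [walkSign_append, walkSign_reverse hσ.1] at hpq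
  rw [← mul_one (walkSign σ p), ← Int.isUnit_mul_self (isUnit_walkSign hσ.2 q), ← mul_assoc,
    hpq, one_mul]

theorem IsBalanced.exists_switching (hσ : IsSignature G σ) (hb : IsBalanced G σ) :
    ∃ ε : V → ℤˣ, ∀ u v, G.Adj u v → σ u v = ↑(ε u * ε v) := by
  have hroot : ∀ v, G.Reachable (G.connectedComponentMk v).out v := fun v =>
    ConnectedComponent.exact (G.connectedComponentMk v).out_eq
  refine ⟨fun v => (isUnit_walkSign hσ.2 (hroot v).some).unit, fun u v huv => ?_⟩
  suffices ∀ {r r' : V}, r = r' → ∀ (p : G.Walk r u) (q : G.Walk r' v),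
      σ u v = walkSign σ p * walkSign σ q from
    this (congrArg Quot.out (ConnectedComponent.connectedComponentMk_eq_of_adj huv)) _ _
  rintro r _ rfl p q
  rw [← hb.walkSign_eq hσ (p.concat huv) q, Walk.concat, walkSign_append, walkSign_cons,
    walkSign_nil, mul_one, ← mul_assoc, Int.isUnit_mul_self (isUnit_walkSign hσ.2 p), one_mul]

theorem isBalanced_of_switching {ε : V → ℤˣ} (hε : ∀ u v, G.Adj u v → σ u v = ↑(ε u * ε v)) :
    IsBalanced G σ := by
  intro u c _
  rw [walkSign_eq_of_switching hε, Int.units_mul_self, Units.val_one]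

lemma IsShortestPath.reverse {u v : V} {p : G.Walk u v} (hp : IsShortestPath p) :
    IsShortestPath p.reverse :=
  ⟨hp.1.reverse, by rw [Walk.length_reverse, hp.2, dist_comm]⟩

lemma exists_isShortestPath {u v : V} (h : G.Reachable u v) :
    ∃ p : G.Walk u v, IsShortestPath p :=
  h.exists_path_of_dist

lemma walkSign_eq_of_isShortestPath_of_adj {u v : V} (huv : G.Adj u v) {p : G.Walk u v}
    (hp : IsShortestPath p) : walkSign σ p = σ u v :=
  walkSign_eq_of_length_eq_one (hp.2.trans (dist_eq_one_iff_adj.mpr huv))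

lemma IsBalanced.compatible (hσ : IsSignature G σ) (hb : IsBalanced G σ) (u v : V) :
    Compatible G σ u v :=
  fun p q _ _ => hb.walkSign_eq hσ p q

lemma compatible_of_adj {u v : V} (huv : G.Adj u v) : Compatible G σ u v := by
  intro p q hp hq
  rw [walkSign_eq_of_isShortestPath_of_adj huv hp, walkSign_eq_of_isShortestPath_of_adj huv hq]

/-- What the argument uses about `sigmaMax` and `sigmaMin`. -/
def IsShortestPathSign (G : SimpleGraph V) (σ s : V → V → ℤ) : Prop :=
  ∀ u v (p : G.Walk u v), IsShortestPath p → Compatible G σ u v → s u v = walkSign σ p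

lemma isShortestPathSign_sigmaMax (hσ : ∀ u v, G.Adj u v → σ u v = 1 ∨ σ u v = -1) :
    IsShortestPathSign G σ (sigmaMax G σ) := by
  intro u v p hp hc
  rcases Int.isUnit_iff.mp (isUnit_walkSign hσ p) with h | h
  · rw [sigmaMax, if_pos ⟨p, hp, h⟩, h]
  · rw [sigmaMax, if_neg, h]
    rintro ⟨q, hq, hq1⟩
    rw [hc q p hq hp, h] at hq1
    cases hq1

lemma isShortestPathSign_sigmaMin (hσ : ∀ u v, G.Adj u v → σ u v = 1 ∨ σ u v = -1) :
    IsShortestPathSign G σ (sigmaMin G σ) := by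
  intro u v p hp hc
  rcases Int.isUnit_iff.mp (isUnit_walkSign hσ p) with h | h
  · rw [sigmaMin, if_pos fun q hq => (hc q p hq hp).trans h, h]
  · rw [sigmaMin, if_neg fun hall => by simp [hall p hp] at h, h]

lemma sigmaMax_comm (hσ : ∀ u v, σ u v = σ v u) (u v : V) :
    sigmaMax G σ u v = sigmaMax G σ v u := by
  have key {a b : V} : (∃ p : G.Walk a b, IsShortestPath p ∧ walkSign σ p = 1) →
      ∃ p : G.Walk b a, IsShortestPath p ∧ walkSign σ p = 1 :=
    fun ⟨p, hp, h⟩ => ⟨p.reverse, hp.reverse, (walkSign_reverse hσ p).trans h⟩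
  unfold sigmaMax
  congr 1
  exact propext ⟨key, key⟩

lemma sigmaMin_comm (hσ : ∀ u v, σ u v = σ v u) (u v : V) :
    sigmaMin G σ u v = sigmaMin G σ v u := by
  have key {a b : V} : (∀ p : G.Walk a b, IsShortestPath p → walkSign σ p = 1) →
      ∀ p : G.Walk b a, IsShortestPath p → walkSign σ p = 1 :=
    fun h p hp => walkSign_reverse hσ p ▸ h _ hp.reverse
  unfold sigmaMin
  congr 1
  exact propext ⟨key, key⟩

lemma sigmaMax_eq_one_or (u v : V) : sigmaMax G σ u v = 1 ∨ sigmaMax G σ u v = -1 := by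
  unfold sigmaMax; split_ifs <;> simp

lemma sigmaMin_eq_one_or (u v : V) : sigmaMin G σ u v = 1 ∨ sigmaMin G σ u v = -1 := by
  unfold sigmaMin; split_ifs <;> simp

end SignedGraph

lemma Int.cast_units_mul_self {R : Type*} [Ring R] (e : ℤˣ) : ((e : ℤ) : R) * e = 1 := by
  rw [← Int.cast_mul, ← Units.val_mul, Int.units_mul_self, Units.val_one, Int.cast_one]

lemma exists_units_mul_abs {x : ℝ} (hx : x ≠ 0) : ∃ e : ℤˣ, (e : ℝ) * |x| = x := by
  rcases hx.lt_or_gt with h | h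
  · exact ⟨-1, by simp [abs_of_neg h]⟩
  · exact ⟨1, by simp [abs_of_pos h]⟩

namespace Matrix

variable {n : Type*}

def SignSimilar (M N : Matrix n n ℝ) : Prop :=
  ∃ ε : n → ℤˣ, ∀ i j, M i j = ε i * N i j * ε j

lemma signSimilar_of_mul_eq_abs_mul {M D : Matrix n n ℝ} {x : n → ℝ} (hx : ∀ i, x i ≠ 0)
    (h : ∀ i j, x i * M i j * x j = |x i| * D i j * |x j|) : SignSimilar M D := by
  choose ε hε using fun i => exists_units_mul_abs (hx i)
  refine ⟨ε, fun i j => mul_right_cancel₀ (mul_ne_zero (abs_ne_zero.mpr (hx i))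
    (abs_ne_zero.mpr (hx j))) ?_⟩
  calc M i j * (|x i| * |x j|)
      = (ε i * ε i : ℝ) * (ε j * ε j) * (M i j * (|x i| * |x j|)) := by
        rw [Int.cast_units_mul_self, Int.cast_units_mul_self]; ring
    _ = ε i * ε j * (x i * M i j * x j) := by
        conv_rhs => rw [← hε i, ← hε j]
        ring
    _ = ε i * D i j * ε j * (|x i| * |x j|) := by rw [h]; ring

section Fintype

variable [Fintype n]

lemma dotProduct_mulVec_eq_sum (A : Matrix n n ℝ) (x : n → ℝ) :
    x ⬝ᵥ A *ᵥ x = ∑ i, ∑ j, x i * A i j * x j := by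
  simp [dotProduct, mulVec, Finset.mul_sum, mul_assoc]

lemma pos_of_mulVec_eq_smul {D : Matrix n n ℝ} (hD : Pairwise fun i j => 0 < D i j)
    {a : n → ℝ} (ha : 0 ≤ a) (ha₀ : a ≠ 0) {r : ℝ} (h : D *ᵥ a = r • a) (i : n) : 0 < a i := by
  refine (ha i).lt_of_ne fun hai => ha₀ (funext fun j => ?_)
  have hrow : ∑ j, D i j * a j = 0 := by simpa [mulVec, dotProduct, ← hai] using congrFun h i
  have hterm : ∀ j, 0 ≤ D i j * a j := fun j => by
    rcases eq_or_ne i j with rfl | hij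
    · simp [← hai]
    · exact mul_nonneg (hD hij).le (ha j)
  have hj := (Finset.sum_eq_zero_iff_of_nonneg fun j _ => hterm j).mp hrow j (Finset.mem_univ j)
  rcases eq_or_ne i j with rfl | hij
  · exact hai.symm
  · exact (mul_eq_zero.mp hj).resolve_left (hD hij).ne'

variable [DecidableEq n]

lemma SignSimilar.charpoly_eq {M N : Matrix n n ℝ} (h : SignSimilar M N) :
    M.charpoly = N.charpoly := by
  obtain ⟨ε, hε⟩ := h
  set E : Matrix n n ℝ := diagonal fun i => (ε i : ℝ)
  have hE : E * E = 1 := by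
    simp [E, diagonal_mul_diagonal, Int.cast_units_mul_self]
  have hM : M = E * N * E := by
    ext i j
    simp [E, hε, mul_diagonal, diagonal_mul]
  rw [hM, charpoly_mul_comm, ← mul_assoc, hE, one_mul]

lemma largestEigenvalue_eq_of_charpoly_eq {A B : Matrix n n ℝ} (h : A.charpoly = B.charpoly) :
    largestEigenvalue A = largestEigenvalue B := by
  rw [largestEigenvalue, largestEigenvalue, h]

lemma largestEigenvalue_eq_sSup_spectrum (A : Matrix n n ℝ) :
    largestEigenvalue A = sSup (spectrum ℝ A) := by
  simp only [largestEigenvalue, ← mem_spectrum_iff_isRoot_charpoly, Set.ofPred_mem_eq]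

lemma le_largestEigenvalue {A : Matrix n n ℝ} {r : ℝ} (hr : r ∈ spectrum ℝ A) :
    r ≤ largestEigenvalue A := by
  rw [largestEigenvalue_eq_sSup_spectrum]
  exact le_csSup A.finite_real_spectrum.bddAbove hr

lemma IsHermitian.exists_mulVec_eq_largestEigenvalue_smul [Nonempty n] {A : Matrix n n ℝ}
    (hA : A.IsHermitian) : ∃ x ≠ 0, A *ᵥ x = largestEigenvalue A • x := by
  have hmem : largestEigenvalue A ∈ spectrum ℝ A := by
    rw [largestEigenvalue_eq_sSup_spectrum]
    exact (hA.spectrum_real_eq_range_eigenvalues ▸ Set.range_nonempty _).csSup_mem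
      A.finite_real_spectrum
  obtain ⟨i, hi⟩ := hA.spectrum_real_eq_range_eigenvalues ▸ hmem
  refine ⟨hA.eigenvectorBasis i, ?_, hi ▸ hA.mulVec_eigenvectorBasis i⟩
  exact fun h => hA.eigenvectorBasis.orthonormal.ne_zero i (by ext j; exact congrFun h j)

lemma IsHermitian.posSemidef_largestEigenvalue_sub {A : Matrix n n ℝ} (hA : A.IsHermitian) :
    (algebraMap ℝ (Matrix n n ℝ) (largestEigenvalue A) - A).PosSemidef := by
  refine posSemidef_iff_isHermitian_and_spectrum_nonneg.mpr ⟨?_, ?_⟩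
  · exact (isHermitian_diagonal _).sub hA
  · rw [← spectrum.singleton_sub_eq]
    rintro _ ⟨_, rfl, r, hr, rfl⟩
    simpa using le_largestEigenvalue hr

lemma IsHermitian.dotProduct_mulVec_le {A : Matrix n n ℝ} (hA : A.IsHermitian) (x : n → ℝ) :
    x ⬝ᵥ A *ᵥ x ≤ largestEigenvalue A * (x ⬝ᵥ x) := by
  have := hA.posSemidef_largestEigenvalue_sub.dotProduct_mulVec_nonneg x
  simp only [star_trivial, sub_mulVec, Algebra.algebraMap_eq_smul_one, smul_mulVec, one_mulVec,
    dotProduct_sub, dotProduct_smul, smul_eq_mul] at this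
  linarith

lemma IsHermitian.mulVec_eq_smul_of_dotProduct_mulVec_eq {A : Matrix n n ℝ} (hA : A.IsHermitian)
    {x : n → ℝ} (hx : x ⬝ᵥ A *ᵥ x = largestEigenvalue A * (x ⬝ᵥ x)) :
    A *ᵥ x = largestEigenvalue A • x := by
  have := (hA.posSemidef_largestEigenvalue_sub.dotProduct_mulVec_zero_iff x).mp
  simp only [star_trivial, sub_mulVec, Algebra.algebraMap_eq_smul_one, smul_mulVec, one_mulVec,
    dotProduct_sub, dotProduct_smul, smul_eq_mul, hx, sub_self, sub_eq_zero, forall_const] at this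
  exact this.symm

theorem signSimilar_of_largestEigenvalue_eq {M D : Matrix n n ℝ} (hM : M.IsHermitian)
    (habs : ∀ i j, |M i j| = D i j) (hD : Pairwise fun i j => 0 < D i j)
    (h : largestEigenvalue M = largestEigenvalue D) : SignSimilar M D := by
  cases isEmpty_or_nonempty n
  · exact ⟨1, fun i => isEmptyElim i⟩
  have hDh : D.IsHermitian := by
    ext i j
    simp [← habs, ← hM.apply i j]
  obtain ⟨x, hx₀, hx⟩ := hM.exists_mulVec_eq_largestEigenvalue_smul
  rw [h] at hx
  set r := largestEigenvalue D
  set a : n → ℝ := fun i => |x i|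
  have hterm : ∀ i j, x i * M i j * x j ≤ a i * D i j * a j := fun i j => by
    simpa only [abs_mul, habs] using le_abs_self (x i * M i j * x j)
  have haa : a ⬝ᵥ a = x ⬝ᵥ x := by simp [a, dotProduct]
  have hxMx : x ⬝ᵥ M *ᵥ x = r * (x ⬝ᵥ x) := by rw [hx, dotProduct_smul, smul_eq_mul]
  have hle : x ⬝ᵥ M *ᵥ x ≤ a ⬝ᵥ D *ᵥ a := by
    rw [dotProduct_mulVec_eq_sum, dotProduct_mulVec_eq_sum]
    exact Finset.sum_le_sum fun i _ => Finset.sum_le_sum fun j _ => hterm i j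
  have haDa : a ⬝ᵥ D *ᵥ a = r * (a ⬝ᵥ a) :=
    le_antisymm (hDh.dotProduct_mulVec_le a) (by rw [haa, ← hxMx]; exact hle)
  have hpos : ∀ i, 0 < a i :=
    pos_of_mulVec_eq_smul hD (fun i => abs_nonneg (x i))
      (fun h0 => hx₀ (funext fun i => abs_eq_zero.mp (congrFun h0 i)))
      (hDh.mulVec_eq_smul_of_dotProduct_mulVec_eq haDa)
  refine signSimilar_of_mul_eq_abs_mul (fun i => abs_pos.mp (hpos i)) fun i j => ?_
  have hsum : ∑ i, ∑ j, x i * M i j * x j = ∑ i, ∑ j, a i * D i j * a j := by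
    rw [← dotProduct_mulVec_eq_sum, ← dotProduct_mulVec_eq_sum, haDa, haa, hxMx]
  have hrow := (Finset.sum_eq_sum_iff_of_le fun i _ => Finset.sum_le_sum fun j _ => hterm i j).mp
    hsum i (Finset.mem_univ i)
  exact (Finset.sum_eq_sum_iff_of_le fun j _ => hterm i j).mp hrow j (Finset.mem_univ j)

end Fintype

end Matrix

section SignedDistanceMatrix

open Matrix

variable {V : Type*} {G : SimpleGraph V} {σ s : V → V → ℤ}

noncomputable def distMatrix (G : SimpleGraph V) : Matrix V V ℝ :=
  .of fun u v => (G.dist u v : ℝ)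

noncomputable def signedDistMatrix (G : SimpleGraph V) (s : V → V → ℤ) : Matrix V V ℝ :=
  .of fun u v => (s u v : ℝ) * G.dist u v

lemma isHermitian_signedDistMatrix (hs : ∀ u v, s u v = s v u) :
    (signedDistMatrix G s).IsHermitian := by
  ext u v
  simp [signedDistMatrix, hs u v, dist_comm]

lemma abs_signedDistMatrix_apply (hs : ∀ u v, s u v = 1 ∨ s u v = -1) (u v : V) :
    |signedDistMatrix G s u v| = distMatrix G u v := by
  rcases hs u v with h | h <;> simp [signedDistMatrix, distMatrix, h]

lemma distMatrix_pos (hG : G.Connected) : Pairwise fun u v => 0 < distMatrix G u v := by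
  intro u v huv
  simpa [distMatrix] using hG.pos_dist_of_ne huv

lemma IsShortestPathSign.eq_of_adj (hs : IsShortestPathSign G σ s) {u v : V}
    (huv : G.Adj u v) : s u v = σ u v := by
  obtain ⟨p, hp⟩ := exists_isShortestPath huv.reachable
  rw [hs u v p hp (compatible_of_adj huv), walkSign_eq_of_isShortestPath_of_adj huv hp]

lemma IsBalanced.signSimilar_signedDistMatrix (hσ : IsSignature G σ) (hG : G.Connected)
    (hs : IsShortestPathSign G σ s) (hb : IsBalanced G σ) :
    SignSimilar (signedDistMatrix G s) (distMatrix G) := by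
  obtain ⟨ε, hε⟩ := hb.exists_switching hσ
  refine ⟨ε, fun u v => ?_⟩
  obtain ⟨p, hp⟩ := exists_isShortestPath (hG u v)
  rw [signedDistMatrix, distMatrix, of_apply, of_apply, hs u v p hp (hb.compatible hσ u v),
    walkSign_eq_of_switching hε]
  push_cast
  ring

lemma isBalanced_of_signSimilar_signedDistMatrix (hs : IsShortestPathSign G σ s)
    (h : SignSimilar (signedDistMatrix G s) (distMatrix G)) : IsBalanced G σ := by
  obtain ⟨ε, hε⟩ := h
  refine isBalanced_of_switching (ε := ε) fun u v huv => ?_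
  have hentry := hε u v
  simp only [signedDistMatrix, distMatrix, of_apply, dist_eq_one_iff_adj.mpr huv,
    hs.eq_of_adj huv, Nat.cast_one, mul_one] at hentry
  exact_mod_cast hentry

theorem isBalanced_iff_signedDistMatrix [Fintype V] [DecidableEq V] (hσ : IsSignature G σ)
    (hG : G.Connected) (hs_comm : ∀ u v, s u v = s v u)
    (hs_unit : ∀ u v, s u v = 1 ∨ s u v = -1) (hs : IsShortestPathSign G σ s) :
    (IsBalanced G σ ↔ (signedDistMatrix G s).charpoly = (distMatrix G).charpoly) ∧
    (IsBalanced G σ ↔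
      largestEigenvalue (signedDistMatrix G s) = largestEigenvalue (distMatrix G)) := by
  have cospectral : IsBalanced G σ →
      (signedDistMatrix G s).charpoly = (distMatrix G).charpoly :=
    fun hb => (hb.signSimilar_signedDistMatrix hσ hG hs).charpoly_eq
  have balanced :
      largestEigenvalue (signedDistMatrix G s) = largestEigenvalue (distMatrix G) →
        IsBalanced G σ :=
    fun h => isBalanced_of_signSimilar_signedDistMatrix hs <|
      signSimilar_of_largestEigenvalue_eq (isHermitian_signedDistMatrix hs_comm)
        (abs_signedDistMatrix_apply hs_unit) (distMatrix_pos hG) h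
  exact ⟨⟨cospectral, fun h => balanced (largestEigenvalue_eq_of_charpoly_eq h)⟩,
    ⟨fun hb => largestEigenvalue_eq_of_charpoly_eq (cospectral hb), balanced⟩⟩

end SignedDistanceMatrix

/-- For a signed graph `(G, σ)` with connected underlying simple graph,
the following are equivalent: (i) `Σ` is balanced; (ii) `D^max(Σ)` is cospectral with the
distance matrix `D(G)`; (iii) `D^min(Σ)` is cospectral with `D(G)`; (iv) the largest
eigenvalue of `D^max(Σ)` equals that of `D(G)`; (v) the largest eigenvalue of `D^min(Σ)`
equals that of `D(G)`. -/
theorem balanced_iff_distance_spectral {V : Type*} [Fintype V] [DecidableEq V]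
    (G : SimpleGraph V) (σ : V → V → ℤ) (hσ : IsSignature G σ) (hG : G.Connected) :
    (IsBalanced G σ ↔
      (Dmax G σ).charpoly = (Matrix.of fun u v => (G.dist u v : ℝ)).charpoly) ∧
    (IsBalanced G σ ↔
      (Dmin G σ).charpoly = (Matrix.of fun u v => (G.dist u v : ℝ)).charpoly) ∧
    (IsBalanced G σ ↔
      largestEigenvalue (Dmax G σ) =
        largestEigenvalue (Matrix.of fun u v => (G.dist u v : ℝ))) ∧
    (IsBalanced G σ ↔
      largestEigenvalue (Dmin G σ) =
        largestEigenvalue (Matrix.of fun u v => (G.dist u v : ℝ))) := by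
  have hmax := isBalanced_iff_signedDistMatrix hσ hG (sigmaMax_comm hσ.1) sigmaMax_eq_one_or
    (isShortestPathSign_sigmaMax hσ.2)
  have hmin := isBalanced_iff_signedDistMatrix hσ hG (sigmaMin_comm hσ.1) sigmaMin_eq_one_or
    (isShortestPathSign_sigmaMin hσ.2)
  exact ⟨hmax.1, hmin.1, hmax.2, hmin.2⟩
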